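/- Let ε > 0. For every y ∈ ℝ, the convolution of the Laplace density with itself satisfies ∫_ℝ (ε/2)·exp(−ε·|y + z|) · (ε/2)·exp(−ε·|z|) dz = (ε/4)·exp(−ε·|y|)·(1 + ε·|y|). (That is, the difference of two i.i.d. Laplace(0, 1/ε) random variables has density y ↦ (ε/4)·exp(−ε·|y|)·(1 + ε·|y|).) -/

import Mathlib

/-!
Since `|y + z| + |z| = max |y| |y + 2z|`, the substitution `u = y + 2z` turns the convolution
integral into `½ ∫ exp (-ε · max |y| |u|) du`. This integrand is the constant `exp (-ε |y|)`
on `|u| ≤ |y|` and an exponential tail outside, which gives `exp (-ε |y|) · (|y| + 1/ε)`.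
-/

open MeasureTheory Real Set

theorem abs_add_abs_eq_max_abs_add_abs_sub {α : Type*} [AddCommGroup α] [LinearOrder α]
    [IsOrderedAddMonoid α] (a b : α) : |a| + |b| = max |a + b| |a - b| := by
  grind [abs_eq_max_neg]

theorem integral_comp_add_mul_left {F : Type*} [NormedAddCommGroup F] [NormedSpace ℝ F]
    (g : ℝ → F) (a b : ℝ) : ∫ x : ℝ, g (b + a * x) = |a⁻¹| • ∫ y : ℝ, g y := by
  rw [Measure.integral_comp_mul_left (fun x => g (b + x)), integral_add_left_eq_self]

theorem integral_exp_neg_mul_max_abs {c a : ℝ} (hc : 0 < c) (ha : 0 ≤ a) :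
    ∫ u, exp (-c * max a |u|) = 2 * exp (-c * a) * (a + c⁻¹) := by
  set f : ℝ → ℝ := fun u => exp (-c * max a u)
  have hflat_int : IntegrableOn f (Ioc 0 a) :=
    (by fun_prop : Continuous f).integrableOn_Ioc
  have hflat : ∫ u in Ioc 0 a, f u = a * exp (-c * a) := by
    rw [setIntegral_congr_fun measurableSet_Ioc fun u hu =>
      show f u = exp (-c * a) by simp only [f, max_eq_left hu.2],
      setIntegral_const, smul_eq_mul, Real.volume_real_Ioc_of_le ha, sub_zero]
  have htail_eq : EqOn f (fun u => exp (-c * u)) (Ioi a) :=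
    fun u hu => by simp only [f, max_eq_right (mem_Ioi.1 hu).le]
  have htail_int : IntegrableOn f (Ioi a) :=
    (integrableOn_exp_mul_Ioi (neg_lt_zero.2 hc) a).congr_fun htail_eq.symm measurableSet_Ioi
  have htail : ∫ u in Ioi a, f u = exp (-c * a) / c := by
    rw [setIntegral_congr_fun measurableSet_Ioi htail_eq, integral_exp_mul_Ioi (neg_lt_zero.2 hc)]
    field_simp
  rw [integral_comp_abs (f := f), ← Ioc_union_Ioi_eq_Ioi ha,
    setIntegral_union (Ioc_disjoint_Ioi le_rfl) measurableSet_Ioi hflat_int htail_int,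
    hflat, htail]
  field_simp

theorem integral_exp_neg_mul_abs_add_abs {c : ℝ} (hc : 0 < c) (y : ℝ) :
    ∫ z, exp (-c * (|y + z| + |z|)) = exp (-c * |y|) * (|y| + c⁻¹) := by
  have hsum (z : ℝ) : |y + z| + |z| = max |y| |y + 2 * z| := by
    rw [abs_add_abs_eq_max_abs_add_abs_sub, max_comm]
    ring_nf
  simp_rw [hsum]
  rw [integral_comp_add_mul_left (fun u => exp (-c * max |y| |u|)),
    integral_exp_neg_mul_max_abs hc (abs_nonneg y)]
  norm_num
  ring

theorem laplace_self_convolution (ε : ℝ) (hε : 0 < ε) (y : ℝ) :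
    ∫ z : ℝ, (ε / 2 * Real.exp (-ε * |y + z|)) * (ε / 2 * Real.exp (-ε * |z|)) =
      ε / 4 * Real.exp (-ε * |y|) * (1 + ε * |y|) := by
  have hprod (z : ℝ) : (ε / 2 * exp (-ε * |y + z|)) * (ε / 2 * exp (-ε * |z|)) =
      ε ^ 2 / 4 * exp (-ε * (|y + z| + |z|)) := by
    rw [mul_add, exp_add]
    ring
  simp_rw [hprod]
  rw [integral_const_mul, integral_exp_neg_mul_abs_add_abs hε]
  field_simp
  ring
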